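/- Evenness of the two-qubit pulse-based model output with initial state |00⟩. Let K ∈ ℕ, Δt > 0 and piecewise-constant controls Θ = ((θ₁^{(1)},θ₂^{(1)}),…,(θ₁^{(K)},θ₂^{(K)})) ∈ (ℝ²)^K be given. For x ∈ ℝ define ψ_0(x) = |0⟩⊗|0⟩ and ψ_k(x) = exp(−iΔt(x·σz⊗σz + θ₁^{(k)}·σx⊗I₂ + θ₂^{(k)}·I₂⊗σx)) ψ_{k−1}(x), and set f(x,Θ) = ⟨ψ_K(x), (σz⊗σz) ψ_K(x)⟩. Then f(−x,Θ) = f(x,Θ) for all x ∈ ℝ; i.e., the model with initial state |00⟩ and observable σz⊗σz realizes only even functions of x. -/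

import Mathlib

open Matrix Kronecker

/-!
The antiunitary map `T v = (σz ⊗ σz) v̄` carries the trajectory at `x` to the trajectory at `-x`:
the Hamiltonian is a real matrix, and conjugation by `σz ⊗ σz` commutes with the coupling
`σz ⊗ σz` but anticommutes with both drives `σx ⊗ I₂`, `I₂ ⊗ σx`, so
`T exp(-iΔt H(x)) T⁻¹ = exp(-iΔt H(-x))`. Since `T` fixes `|00⟩` and leaves the expectation value
of `σz ⊗ σz` unchanged, `f(-x) = f(x)`.
-/

section Conjugation

theorem Matrix.kronecker_conjTranspose_transpose {l m p q R : Type*} [CommMagma R] [StarMul R]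
    (A : Matrix l m R) (B : Matrix p q R) : (A ⊗ₖ B)ᴴᵀ = Aᴴᵀ ⊗ₖ Bᴴᵀ := by
  rw [conjTranspose_kronecker, kroneckerMap_transpose]

variable {n : Type*} [Fintype n] {𝕜 : Type*} [RCLike 𝕜]

theorem Matrix.conjTranspose_transpose_mulVec_star (M : Matrix n n 𝕜) (v : n → 𝕜) :
    Mᴴᵀ *ᵥ star v = star (M *ᵥ v) := by
  rw [star_mulVec, mulVec_transpose]

theorem Matrix.star_dotProduct_mulVec_of_real_involution {S : Matrix n n 𝕜} [DecidableEq n]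
    (hS : S * S = 1) (hS_real : Sᴴᵀ = S) (v : n → 𝕜) :
    star (S *ᵥ star v) ⬝ᵥ S *ᵥ (S *ᵥ star v) = star v ⬝ᵥ S *ᵥ v := by
  rw [← conjTranspose_transpose_mulVec_star, star_star, hS_real, mulVec_mulVec, hS, one_mulVec,
    dotProduct_comm]

theorem Matrix.exp_mul_conjTranspose_transpose_mul [DecidableEq n] {S : Matrix n n 𝕜}
    (hS : S * S = 1) (A : Matrix n n 𝕜) :
    NormedSpace.exp (S * Aᴴᵀ * S) = S * (NormedSpace.exp A)ᴴᵀ * S := by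
  have h := exp_conj S Aᴴᵀ (IsUnit.of_mul_eq_one S hS)
  rwa [inv_eq_right_inv hS, exp_transpose, exp_conjTranspose] at h

end Conjugation

/-- The Pauli matrix `σx`. -/
noncomputable def σx : Matrix (Fin 2) (Fin 2) ℂ := !![0, 1; 1, 0]

/-- The Pauli matrix `σy`. -/
noncomputable def σy : Matrix (Fin 2) (Fin 2) ℂ := !![0, -Complex.I; Complex.I, 0]

/-- The Pauli matrix `σz`. -/
noncomputable def σz : Matrix (Fin 2) (Fin 2) ℂ := !![1, 0; 0, -1]

/-- The 2×2 identity matrix. -/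
noncomputable def I₂ : Matrix (Fin 2) (Fin 2) ℂ := 1

theorem σz_mul_σz : σz * σz = 1 := by
  ext i j; fin_cases i <;> fin_cases j <;> simp [σz, mul_apply, Fin.sum_univ_two]

theorem σz_mul_σx_mul_σz : σz * σx * σz = -σx := by
  ext i j; fin_cases i <;> fin_cases j <;> simp [σz, σx, mul_apply, Fin.sum_univ_two]

theorem σz_conjTranspose_transpose : σzᴴᵀ = σz := by
  ext i j; fin_cases i <;> fin_cases j <;> simp [σz]

theorem σx_conjTranspose_transpose : σxᴴᵀ = σx := by
  ext i j; fin_cases i <;> fin_cases j <;> simp [σx]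

theorem I₂_conjTranspose_transpose : I₂ᴴᵀ = I₂ := by
  simp [I₂]

/-- The generator of the `k`-th pulse in `psi` is `hamiltonian x θ₁ θ₂` with `(θ₁, θ₂) = Θ k`. -/
noncomputable def hamiltonian (x θ₁ θ₂ : ℝ) : Matrix (Fin 2 × Fin 2) (Fin 2 × Fin 2) ℂ :=
  (x : ℂ) • (σz ⊗ₖ σz) + (θ₁ : ℂ) • (σx ⊗ₖ I₂) + (θ₂ : ℂ) • (I₂ ⊗ₖ σx)

theorem σzσz_mul_σzσz : (σz ⊗ₖ σz) * (σz ⊗ₖ σz) = 1 := by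
  rw [← mul_kronecker_mul, σz_mul_σz, one_kronecker_one]

theorem σzσz_conjTranspose_transpose : (σz ⊗ₖ σz)ᴴᵀ = σz ⊗ₖ σz := by
  rw [kronecker_conjTranspose_transpose, σz_conjTranspose_transpose]

theorem hamiltonian_conjTranspose_transpose (x θ₁ θ₂ : ℝ) :
    (hamiltonian x θ₁ θ₂)ᴴᵀ = hamiltonian x θ₁ θ₂ := by
  simp only [hamiltonian, conjTranspose_add, transpose_add, conjTranspose_smul, transpose_smul,
    kronecker_conjTranspose_transpose, σz_conjTranspose_transpose, σx_conjTranspose_transpose,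
    I₂_conjTranspose_transpose, Complex.star_def, Complex.conj_ofReal]

theorem σz_mul_I₂_mul_σz : σz * I₂ * σz = I₂ := by
  rw [I₂, mul_one, σz_mul_σz]

theorem σzσz_mul_hamiltonian_mul_σzσz (x θ₁ θ₂ : ℝ) :
    (σz ⊗ₖ σz) * hamiltonian x θ₁ θ₂ * (σz ⊗ₖ σz) = -hamiltonian (-x) θ₁ θ₂ := by
  have hσz : σz * σz * σz = σz := by rw [σz_mul_σz, one_mul]
  have hσx : σz * σx * σz = (-1 : ℂ) • σx := by rw [σz_mul_σx_mul_σz, neg_one_smul]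
  simp only [hamiltonian, Matrix.mul_add, Matrix.add_mul, Matrix.mul_smul, Matrix.smul_mul,
    ← mul_kronecker_mul, hσz, hσx, σz_mul_I₂_mul_σz, smul_kronecker, kronecker_smul]
  push_cast
  module

theorem exp_hamiltonian_neg (Δt x θ₁ θ₂ : ℝ) :
    NormedSpace.exp ((-(Δt : ℂ) * Complex.I) • hamiltonian (-x) θ₁ θ₂) =
      (σz ⊗ₖ σz) * (NormedSpace.exp ((-(Δt : ℂ) * Complex.I) • hamiltonian x θ₁ θ₂))ᴴᵀ *
        (σz ⊗ₖ σz) := by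
  rw [← exp_mul_conjTranspose_transpose_mul σzσz_mul_σzσz, conjTranspose_smul, transpose_smul,
    hamiltonian_conjTranspose_transpose, Matrix.mul_smul, Matrix.smul_mul,
    σzσz_mul_hamiltonian_mul_σzσz]
  simp [Complex.conj_I]

/-- The state sequence of the two-qubit pulse-based model with initial state `|00⟩`:
`ψ_{k+1} = exp(−iΔt(x·σz⊗σz + θ₁^{(k)}·σx⊗I₂ + θ₂^{(k)}·I₂⊗σx)) ψ_k`. -/
noncomputable def psi (K : ℕ) (Δt : ℝ) (Θ : Fin K → ℝ × ℝ) (x : ℝ) :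
    ℕ → (Fin 2 × Fin 2 → ℂ)
  | 0 => fun a => if a = (0, 0) then 1 else 0
  | k + 1 =>
      if h : k < K then
        (NormedSpace.exp ((-(Δt : ℂ) * Complex.I) •
            ((x : ℂ) • (σz ⊗ₖ σz) + ((Θ ⟨k, h⟩).1 : ℂ) • (σx ⊗ₖ I₂) +
              ((Θ ⟨k, h⟩).2 : ℂ) • (I₂ ⊗ₖ σx)))).mulVec (psi K Δt Θ x k)
      else psi K Δt Θ x k

/-- The model output `f(x,Θ) = ⟨ψ_K(x), (σz⊗σz) ψ_K(x)⟩`. -/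
noncomputable def f (K : ℕ) (Δt : ℝ) (Θ : Fin K → ℝ × ℝ) (x : ℝ) : ℝ :=
  (star (psi K Δt Θ x K) ⬝ᵥ (σz ⊗ₖ σz).mulVec (psi K Δt Θ x K)).re

theorem psi_succ_of_lt {K : ℕ} (Δt : ℝ) (Θ : Fin K → ℝ × ℝ) (x : ℝ) {k : ℕ} (hk : k < K) :
    psi K Δt Θ x (k + 1) =
      NormedSpace.exp ((-(Δt : ℂ) * Complex.I) • hamiltonian x (Θ ⟨k, hk⟩).1 (Θ ⟨k, hk⟩).2) *ᵥ
        psi K Δt Θ x k := by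
  rw [psi, dif_pos hk, hamiltonian]

theorem psi_zero_eq_σzσz_mulVec_star (K : ℕ) (Δt : ℝ) (Θ : Fin K → ℝ × ℝ) (x y : ℝ) :
    psi K Δt Θ y 0 = (σz ⊗ₖ σz) *ᵥ star (psi K Δt Θ x 0) := by
  ext ⟨i, j⟩
  fin_cases i <;> fin_cases j <;>
    simp [psi, mulVec, dotProduct, Fintype.sum_prod_type, Fin.sum_univ_two, σz, Prod.ext_iff]

theorem psi_neg (K : ℕ) (Δt : ℝ) (Θ : Fin K → ℝ × ℝ) (x : ℝ) (k : ℕ) :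
    psi K Δt Θ (-x) k = (σz ⊗ₖ σz) *ᵥ star (psi K Δt Θ x k) := by
  induction k with
  | zero => exact psi_zero_eq_σzσz_mulVec_star K Δt Θ x (-x)
  | succ k ih =>
    by_cases hk : k < K
    · rw [psi_succ_of_lt _ _ _ hk, psi_succ_of_lt _ _ _ hk, ih, exp_hamiltonian_neg,
        ← conjTranspose_transpose_mulVec_star, mulVec_mulVec, mulVec_mulVec, mul_assoc, mul_assoc,
        σzσz_mul_σzσz, mul_one]
    · simp only [psi, dif_neg hk, ih]

theorem model_output_even_general (K : ℕ) (Δt : ℝ) (Θ : Fin K → ℝ × ℝ) (x : ℝ) :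
    f K Δt Θ (-x) = f K Δt Θ x := by
  rw [f, f, psi_neg,
    star_dotProduct_mulVec_of_real_involution σzσz_mul_σzσz σzσz_conjTranspose_transpose]

/-- **Evenness of the two-qubit pulse-based model output with initial state `|00⟩`**:
`f(−x,Θ) = f(x,Θ)` for all `x ∈ ℝ`; the model realizes only even functions of `x`. -/
theorem model_output_even (K : ℕ) (Δt : ℝ) (hΔt : 0 < Δt) (Θ : Fin K → ℝ × ℝ) (x : ℝ) :
    f K Δt Θ (-x) = f K Δt Θ x :=
  model_output_even_general K Δt Θ x
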